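/- Let C be a category equipped with a functor s : I → C, let A be an abelian category, let T : C → A be a functor, and let λ ⊢ m be an ordered shifted partition of length n with λ_0 = 0 and λ_i ≥ 1 for all 1 ≤ i ≤ n. Then the subobject ⋂_{i=1}^{n} ker(Ts(f_{{i}_λ})) of Ts(m) is the internal direct sum of the subobjects im(Ts(f_{m̲∖S})) ∩ ⋂_{i∈S} ker(Ts(f_{{i}})), where S ranges over the subsets of m̲ such that S ∩ {i}_λ ≠ ∅ for every i ∈ {1,…,n}. -/

import Mathlib

/-
The endomorphisms `e R = T s(id_R)` of `X = T s(m)` satisfy `e R ≫ e R' = e (R ∩ R')` and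
`e m̲ = 𝟙`. Möbius inversion on the Boolean lattice of subsets of `m̲` turns them into the
idempotents `π S = ∑_{R ⊆ S} (-1)^{|R|} e (S ∖ R)`, which sum to `𝟙` over `S ⊆ m̲`. The piece
`W_S` consists of the maps `y` fixed by `e S` and killed by `e (m̲ ∖ {i})` for every `i ∈ S`, and
on such a `y` the idempotent `π S'` acts as the identity if `S' = S` and as zero otherwise. This
gives the independence of the pieces. A map into `⨅ᵢ ker (e (m̲ ∖ {i}_λ))` is the sum of its
components `y ≫ π S`; the component lies in `W_S`, and it vanishes unless `S` meets every block,
because then `π S` factors through some `e (m̲ ∖ {i}_λ)`.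
-/

open CategoryTheory CategoryTheory.Limits

/-- The category `𝓘`: objects are the non-negative integers, and a morphism `m ⟶ n`
is a subset of `{0, …, min m n − 1}` (the 0-based incarnation of `{1, …, min(m,n)}`),
thought of as the partial identity defined on that subset.  Composition is given by
intersection, and the identity of `n` is the full subset. -/
abbrev Icat : Type := ℕ

instance : Category Icat where
  Hom m n := {S : Finset ℕ // S ⊆ Finset.range (min m n)}
  id n := ⟨Finset.range n, by simp⟩
  comp {m n k} f g := ⟨f.1 ∩ g.1, by
    intro i hi
    rw [Finset.mem_inter] at hi
    have h1 := f.2 hi.1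
    have h2 := g.2 hi.2
    rw [Finset.mem_range] at h1 h2 ⊢
    omega⟩
  id_comp {m n} f := by
    apply Subtype.ext
    dsimp
    rw [Finset.inter_eq_right]
    intro i hi
    have := f.2 hi
    rw [Finset.mem_range] at this ⊢
    omega
  comp_id {m n} f := by
    apply Subtype.ext
    dsimp
    rw [Finset.inter_eq_left]
    intro i hi
    have := f.2 hi
    rw [Finset.mem_range] at this ⊢
    omega
  assoc f g h := by
    apply Subtype.ext
    exact Finset.inter_assoc _ _ _

/-- The endomorphism of `m` in `𝓘` given by the partial identity defined on the
subset `R` (intersected with the ambient set `{0, …, m−1}`). -/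
def pId (m : ℕ) (R : Finset ℕ) : (m : Icat) ⟶ (m : Icat) :=
  ⟨R ∩ Finset.range m, by
    intro i hi
    rw [Finset.mem_inter] at hi
    simpa [Nat.min_self] using hi.2⟩

universe v u w z

variable {C : Type u} [Category.{v} C] {A : Type w} [Category.{z} A] [Abelian A]

/-- The endomorphism `f_T` of `m` in `𝓘` that "forgets" the subset `T ⊆ m̲`, i.e. the
partial identity defined on `m̲ ∖ T` (0-based). -/
def fEnd (m : ℕ) (T : Finset ℕ) : (m : Icat) ⟶ (m : Icat) :=
  pId m (Finset.range m \ T)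

/-- The `i`-th block `{i}_λ` of an ordered shifted partition `λ = (lam 0, …, lam n)`,
in 0-based coordinates: `{λ_0 + ⋯ + λ_{i−1}, …, λ_0 + ⋯ + λ_i − 1}`. -/
def blkOf (lam : ℕ → ℕ) (i : ℕ) : Finset ℕ :=
  Finset.Ico (∑ j ∈ Finset.range i, lam j) (∑ j ∈ Finset.range (i + 1), lam j)

/-- The Finset of subsets `S ⊆ m̲` meeting every block `{i}_λ`, `i ∈ {1, …, n}`. -/
noncomputable def meetsAllBlocks (m n : ℕ) (lam : ℕ → ℕ) : Finset (Finset ℕ) := by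
  classical
  exact (Finset.range m).powerset.filter
    (fun S => ∀ i ∈ Finset.Icc 1 n, (S ∩ blkOf lam i).Nonempty)

/-- The subobject `im(T s(f_{m̲ ∖ S})) ⊓ ⨅_{i ∈ S} ker(T s(f_{{i}}))` of `T(s(m))`. -/
noncomputable def pieceW (s : Icat ⥤ C) (T : C ⥤ A) (m : ℕ) (S : Finset ℕ) :
    Subobject (T.obj (s.obj m)) :=
  imageSubobject (T.map (s.map (fEnd m (Finset.range m \ S))))
    ⊓ S.inf (fun i => kernelSubobject (T.map (s.map (fEnd m {i}))))

section MoebiusTransform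

variable {α M : Type*} [DecidableEq α] [AddCommGroup M]

def moebiusTransform (x : Finset α → M) (S : Finset α) : M :=
  ∑ R ∈ S.powerset, ((-1 : ℤ) ^ R.card) • x (S \ R)

lemma moebiusTransform_congr {x x' : Finset α → M} {S : Finset α}
    (h : ∀ T ⊆ S, x T = x' T) : moebiusTransform x S = moebiusTransform x' S :=
  Finset.sum_congr rfl fun _ _ => by rw [h _ Finset.sdiff_subset]

lemma moebiusTransform_insert {a : α} {S : Finset α} (ha : a ∉ S) (x : Finset α → M) :
    moebiusTransform x (insert a S) =
      moebiusTransform (fun T => x (insert a T)) S - moebiusTransform x S := by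
  rw [moebiusTransform, Finset.sum_powerset_insert ha, sub_eq_add_neg, moebiusTransform,
    moebiusTransform, ← Finset.sum_neg_distrib]
  congr 1 <;> refine Finset.sum_congr rfl fun R hR => ?_
  · rw [Finset.insert_sdiff_of_notMem _ fun h => ha (Finset.mem_powerset.1 hR h)]
  · rw [Finset.card_insert_of_notMem fun h => ha (Finset.mem_powerset.1 hR h), pow_succ,
      mul_neg_one, neg_smul, Finset.insert_sdiff_insert, Finset.sdiff_insert_of_notMem ha]

lemma sum_powerset_moebiusTransform (U : Finset α) (x : Finset α → M) :
    ∑ S ∈ U.powerset, moebiusTransform x S = x U := by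
  induction U using Finset.induction_on generalizing x with
  | empty => simp [moebiusTransform]
  | insert a U ha ih =>
    rw [Finset.sum_powerset_insert ha, ← Finset.sum_add_distrib, ← ih fun T => x (insert a T)]
    refine Finset.sum_congr rfl fun S hS => ?_
    rw [moebiusTransform_insert fun h => ha (Finset.mem_powerset.1 hS h)]
    abel

lemma moebiusTransform_ite_subset (S₀ : Finset α) (y : M) (S : Finset α) :
    moebiusTransform (fun T => if S₀ ⊆ T then y else 0) S = if S = S₀ then y else 0 := by
  induction S using Finset.induction_on generalizing S₀ with
  | empty => simp [moebiusTransform, Finset.subset_empty, eq_comm]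
  | insert a S ha ih =>
    rw [moebiusTransform_insert ha]
    by_cases haS₀ : a ∈ S₀
    · have hS₀ : insert a S = S₀ ↔ S = S₀.erase a :=
        ⟨by rintro rfl; exact (Finset.erase_insert ha).symm,
          by rintro rfl; exact Finset.insert_erase haS₀⟩
      simp only [Finset.subset_insert_iff, ih, hS₀, if_neg fun h : S = S₀ => ha (h ▸ haS₀),
        sub_zero]
    · simp only [Finset.subset_insert_iff_of_notMem haS₀, sub_self,
        if_neg fun h : insert a S = S₀ => haS₀ (h ▸ Finset.mem_insert_self a S)]

end MoebiusTransform

section Preadditive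

variable {𝒞 : Type*} [Category 𝒞] [Preadditive 𝒞] {α : Type*} [DecidableEq α]

lemma comp_moebiusTransform {X Y Z : 𝒞} (y : Y ⟶ Z) (x : Finset α → (Z ⟶ X))
    (S : Finset α) :
    y ≫ moebiusTransform x S = moebiusTransform (fun T => y ≫ x T) S := by
  simp only [moebiusTransform, Preadditive.comp_sum, Preadditive.comp_zsmul]

lemma moebiusTransform_comp {X Y Z : 𝒞} (x : Finset α → (Y ⟶ Z)) (g : Z ⟶ X)
    (S : Finset α) :
    moebiusTransform x S ≫ g = moebiusTransform (fun T => x T ≫ g) S := by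
  simp only [moebiusTransform, Preadditive.sum_comp, Preadditive.zsmul_comp]

lemma CategoryTheory.Subobject.factors_sum {X Y : 𝒞} {P : Subobject X} {ι : Type*}
    (s : Finset ι) (f : ι → (Y ⟶ X)) (h : ∀ i ∈ s, P.Factors (f i)) :
    P.Factors (∑ i ∈ s, f i) :=
  Finset.sum_induction f P.Factors (fun _ _ => Subobject.factors_add _ _)
    Subobject.factors_zero h

end Preadditive

section Abelian

variable {𝒜 : Type*} [Category 𝒜] [Abelian 𝒜]

lemma imageSubobject_factors_iff_comp_eq_self {X Y : 𝒜} {g : X ⟶ X} (hg : g ≫ g = g)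
    (y : Y ⟶ X) : (imageSubobject g).Factors y ↔ y ≫ g = y := by
  have harrow : (imageSubobject g).arrow ≫ g = (imageSubobject g).arrow :=
    (cancel_epi (factorThruImageSubobject g)).1 <| by
      rw [← Category.assoc, imageSubobject_arrow_comp, hg]
  refine ⟨fun h => ?_, fun h => h ▸ imageSubobject_factors_comp_self g y⟩
  rw [← Subobject.factorThru_arrow _ _ h, Category.assoc, harrow]

lemma CategoryTheory.Subobject.inf_eq_bot_of_comp_eq_self {X : 𝒜} {P Q : Subobject X}
    {p : X ⟶ X} (hP : P.arrow ≫ p = P.arrow) (hQ : Q ≤ kernelSubobject p) : P ⊓ Q = ⊥ := by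
  have hfix : (P ⊓ Q).arrow ≫ p = (P ⊓ Q).arrow := by
    rw [← Subobject.ofLE_arrow _root_.inf_le_left, Category.assoc, hP]
  have hkill : (P ⊓ Q).arrow ≫ p = 0 := by
    rw [← Subobject.ofLE_arrow (_root_.inf_le_right.trans hQ), Category.assoc,
      kernelSubobject_arrow_comp, comp_zero]
  exact eq_bot_iff.2 <| Subobject.le_of_factors <|
    (Subobject.bot_factors_iff_zero _).2 (hfix ▸ hkill)

end Abelian

structure PartialIdRep {𝒞 : Type*} [Category 𝒞] (X : 𝒞) {α : Type*} [DecidableEq α]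
    (U : Finset α) where
  keep : Finset α → (X ⟶ X)
  keep_comp : ∀ R R', keep R ≫ keep R' = keep (R ∩ R')
  keep_univ : keep U = 𝟙 X

namespace PartialIdRep

variable {𝒞 : Type*} [Category 𝒞] {X : 𝒞} {α : Type*} [DecidableEq α] {U : Finset α}
  (P : PartialIdRep X U)

lemma keep_univ_inter (R : Finset α) : P.keep (U ∩ R) = P.keep R := by
  rw [← P.keep_comp, P.keep_univ, Category.id_comp]

section Preadditive

variable [Preadditive 𝒞]

def LiesIn {Y : 𝒞} (S : Finset α) (y : Y ⟶ X) : Prop :=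
  y ≫ P.keep S = y ∧ ∀ i ∈ S, y ≫ P.keep (U \ {i}) = 0

def proj (S : Finset α) : X ⟶ X :=
  moebiusTransform P.keep S

lemma sum_proj : ∑ S ∈ U.powerset, P.proj S = 𝟙 X := by
  rw [← P.keep_univ]
  exact sum_powerset_moebiusTransform U P.keep

lemma keep_comp_proj {A S : Finset α} (h : S ⊆ A) : P.keep A ≫ P.proj S = P.proj S := by
  rw [proj, comp_moebiusTransform]
  exact moebiusTransform_congr fun T hT => by
    rw [P.keep_comp, Finset.inter_eq_right.2 (hT.trans h)]

variable {P}

lemma LiesIn.precomp {Y Z : 𝒞} {S : Finset α} {y : Y ⟶ X} (h : P.LiesIn S y) (z : Z ⟶ Y) :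
    P.LiesIn S (z ≫ y) :=
  ⟨by rw [Category.assoc, h.1], fun i hi => by rw [Category.assoc, h.2 i hi, comp_zero]⟩

lemma LiesIn.comp_keep {Y : 𝒞} {S₀ : Finset α} {y : Y ⟶ X} (h : P.LiesIn S₀ y)
    (B : Finset α) : y ≫ P.keep B = if S₀ ⊆ B then y else 0 := by
  split_ifs with hB
  · rw [← h.1, Category.assoc, P.keep_comp, Finset.inter_eq_left.2 hB]
  · obtain ⟨j, hj, hjB⟩ := Finset.not_subset.1 hB
    -- forgetting `j ∉ B` first does not change `keep B`
    have hfactor : P.keep B = P.keep (U \ {j}) ≫ P.keep B := by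
      rw [P.keep_comp, ← P.keep_univ_inter B]
      congr 1
      grind
    rw [hfactor, ← Category.assoc, h.2 j hj, zero_comp]

lemma LiesIn.comp_proj {Y : 𝒞} {S₀ : Finset α} {y : Y ⟶ X} (h : P.LiesIn S₀ y)
    (S : Finset α) : y ≫ P.proj S = if S = S₀ then y else 0 := by
  rw [proj, comp_moebiusTransform]
  simp only [h.comp_keep]
  exact moebiusTransform_ite_subset S₀ y S

variable (P)

lemma liesIn_proj (S : Finset α) : P.LiesIn S (P.proj S) := by
  refine ⟨?_, fun i hi => ?_⟩
  · rw [proj, moebiusTransform_comp]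
    exact moebiusTransform_congr fun T hT => by rw [P.keep_comp, Finset.inter_eq_left.2 hT]
  · obtain ⟨S', hiS', rfl⟩ : ∃ S', i ∉ S' ∧ insert i S' = S :=
      ⟨S.erase i, Finset.notMem_erase i S, Finset.insert_erase hi⟩
    rw [proj, moebiusTransform_insert hiS', Preadditive.sub_comp, moebiusTransform_comp,
      moebiusTransform_comp]
    simp only [P.keep_comp, Finset.insert_inter_of_notMem (by simp : i ∉ U \ {i}), sub_self]

end Preadditive

section Abelian

variable [Abelian 𝒞]

noncomputable def piece (S : Finset α) : Subobject X :=
  imageSubobject (P.keep S) ⊓ S.inf fun i => kernelSubobject (P.keep (U \ {i}))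

lemma piece_factors_iff {Y : 𝒞} (y : Y ⟶ X) (S : Finset α) :
    (P.piece S).Factors y ↔ P.LiesIn S y := by
  rw [piece, Subobject.inf_factors, Subobject.finset_inf_factors,
    imageSubobject_factors_iff_comp_eq_self (by rw [P.keep_comp, Finset.inter_self])]
  simp only [kernelSubobject_factors_iff]
  rfl

lemma liesIn_piece_arrow (S : Finset α) : P.LiesIn S (P.piece S).arrow :=
  (P.piece_factors_iff _ S).1 (Subobject.factors_self _)

lemma piece_le_kernelSubobject {S B : Finset α} (h : (S ∩ B).Nonempty) :
    P.piece S ≤ kernelSubobject (P.keep (U \ B)) := by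
  obtain ⟨j, hj⟩ := h
  rw [Finset.mem_inter] at hj
  refine le_kernelSubobject _ _ ?_
  rw [(P.liesIn_piece_arrow S).comp_keep, if_neg]
  exact fun hS => (Finset.mem_sdiff.1 (hS hj.1)).2 hj.2

lemma piece_inf_sup_erase_eq_bot (𝒮 : Finset (Finset α)) (S : Finset α) :
    P.piece S ⊓ (𝒮.erase S).sup P.piece = ⊥ :=
  Subobject.inf_eq_bot_of_comp_eq_self (p := P.proj S)
    (by rw [(P.liesIn_piece_arrow S).comp_proj, if_pos rfl])
    (Finset.sup_le fun S' hS' => le_kernelSubobject _ _ <| by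
      rw [(P.liesIn_piece_arrow S').comp_proj, if_neg (Finset.ne_of_mem_erase hS').symm])

lemma inf_kernelSubobject_le_sup_piece {ι : Type*} (I : Finset ι) (B : ι → Finset α)
    (𝒮 : Finset (Finset α)) (h𝒮 : ∀ S ⊆ U, (∀ i ∈ I, (S ∩ B i).Nonempty) → S ∈ 𝒮) :
    I.inf (fun i => kernelSubobject (P.keep (U \ B i))) ≤ 𝒮.sup P.piece := by
  set K := I.inf fun i => kernelSubobject (P.keep (U \ B i))
  have hK : ∀ i ∈ I, K.arrow ≫ P.keep (U \ B i) = 0 := fun i hi =>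
    (kernelSubobject_factors_iff _ _).1
      ((Subobject.finset_inf_factors _).1 (Subobject.factors_self K) i hi)
  have hdecomp : K.arrow = ∑ S ∈ U.powerset, K.arrow ≫ P.proj S := by
    rw [← Preadditive.comp_sum, P.sum_proj, Category.comp_id]
  refine Subobject.le_of_factors ?_
  rw [hdecomp]
  refine Subobject.factors_sum _ _ fun S hSU => ?_
  by_cases hS : S ∈ 𝒮
  · exact Subobject.factors_of_le _ (Finset.le_sup hS)
      ((P.piece_factors_iff _ S).2 ((P.liesIn_proj S).precomp K.arrow))
  · obtain ⟨i, hi, hSB⟩ : ∃ i ∈ I, ¬(S ∩ B i).Nonempty := by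
      by_contra! h
      exact hS (h𝒮 S (Finset.mem_powerset.1 hSU) h)
    have hSsub : S ⊆ U \ B i := Finset.subset_sdiff.2 ⟨Finset.mem_powerset.1 hSU,
      Finset.disjoint_iff_inter_eq_empty.2 (Finset.not_nonempty_iff_eq_empty.1 hSB)⟩
    rw [← P.keep_comp_proj hSsub, ← Category.assoc, hK i hi, zero_comp]
    exact Subobject.factors_zero

end Abelian

end PartialIdRep

lemma pId_comp (m : ℕ) (R R' : Finset ℕ) : pId m R ≫ pId m R' = pId m (R ∩ R') :=
  Subtype.ext (Finset.inter_inter_distrib_right R R' (Finset.range m)).symm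

lemma pId_range (m : ℕ) : pId m (Finset.range m) = 𝟙 (m : Icat) :=
  Subtype.ext (Finset.inter_self _)

def Icat.partialIdRep {𝒞 : Type*} [Category 𝒞] (F : Icat ⥤ 𝒞) (m : ℕ) :
    PartialIdRep (F.obj m) (Finset.range m) where
  keep R := F.map (pId m R)
  keep_comp R R' := by rw [← F.map_comp, pId_comp]
  keep_univ := by rw [pId_range, F.map_id]

lemma pieceW_eq (s : Icat ⥤ C) (T : C ⥤ A) (m : ℕ) (S : Finset ℕ) :
    pieceW s T m S = (Icat.partialIdRep (s ⋙ T) m).piece S := by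
  have hkeep : T.map (s.map (fEnd m (Finset.range m \ S))) =
      (Icat.partialIdRep (s ⋙ T) m).keep S := by
    rw [← PartialIdRep.keep_univ_inter, ← Finset.inf_eq_inter, ← sdiff_sdiff_right_self]
    rfl
  simp only [pieceW, PartialIdRep.piece, hkeep]
  rfl

lemma mem_meetsAllBlocks (m n : ℕ) (lam : ℕ → ℕ) (S : Finset ℕ) :
    S ∈ meetsAllBlocks m n lam ↔
      S ⊆ Finset.range m ∧ ∀ i ∈ Finset.Icc 1 n, (S ∩ blkOf lam i).Nonempty := by
  simp [meetsAllBlocks]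

theorem inf_ker_internal_direct_sum_general
    (s : Icat ⥤ C) (T : C ⥤ A) (n m : ℕ) (lam : ℕ → ℕ) :
    ((meetsAllBlocks m n lam).sup (pieceW s T m)
        = (Finset.Icc 1 n).inf
            (fun i => kernelSubobject (T.map (s.map (fEnd m (blkOf lam i))))))
    ∧ ∀ S ∈ meetsAllBlocks m n lam,
        pieceW s T m S ⊓ ((meetsAllBlocks m n lam).erase S).sup (pieceW s T m) = ⊥ := by
  set P := Icat.partialIdRep (s ⋙ T) m
  rw [show pieceW s T m = P.piece from funext (pieceW_eq s T m)]
  refine ⟨le_antisymm ?_ ?_, fun S _ => P.piece_inf_sup_erase_eq_bot _ S⟩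
  · refine Finset.sup_le fun S hS => Finset.le_inf fun i hi => ?_
    exact P.piece_le_kernelSubobject (((mem_meetsAllBlocks m n lam S).1 hS).2 i hi)
  · exact P.inf_kernelSubobject_le_sup_piece _ (blkOf lam) _ fun S hSU hS =>
      (mem_meetsAllBlocks m n lam S).2 ⟨hSU, hS⟩

/-- Statement 16: let `C` be a category with a functor `s : 𝓘 ⥤ C`, `A` an abelian
category, `T : C ⥤ A` a functor and `λ ⊢ m` an ordered shifted partition of length `n`
with `λ_0 = 0` and `λ_i ≥ 1` for `1 ≤ i ≤ n`.  Then the subobject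
`⨅_{i=1}^{n} ker(T s(f_{{i}_λ}))` of `T(s(m))` is the internal direct sum of the
subobjects `W_S = im(T s(f_{m̲ ∖ S})) ⊓ ⨅_{i ∈ S} ker(T s(f_{{i}}))`, where `S` ranges
over the subsets of `m̲` meeting every block: i.e. the `W_S` have supremum
`⨅_{i=1}^{n} ker(T s(f_{{i}_λ}))`, and each `W_S` meets the supremum of the others
trivially. -/
theorem inf_ker_internal_direct_sum
    (s : Icat ⥤ C) (T : C ⥤ A) (n m : ℕ) (lam : ℕ → ℕ)
    (hsum : ∑ i ∈ Finset.range (n + 1), lam i = m) (h0 : lam 0 = 0)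
    (h1 : ∀ i, 1 ≤ i → i ≤ n → 1 ≤ lam i) :
    ((meetsAllBlocks m n lam).sup (pieceW s T m)
        = (Finset.Icc 1 n).inf
            (fun i => kernelSubobject (T.map (s.map (fEnd m (blkOf lam i))))))
    ∧ ∀ S ∈ meetsAllBlocks m n lam,
        pieceW s T m S ⊓ ((meetsAllBlocks m n lam).erase S).sup (pieceW s T m) = ⊥ :=
  inf_ker_internal_direct_sum_general s T n m lam
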